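/- Let f(y) = y^{−1} + ∑_{k≥0} f_k y^k be a formal Laurent series with complex coefficients having at most a simple pole at y = 0 with residue 1. Then the following identity of formal power series in w holds: w·exp(∑_{k≥1} (1/k)·([y^0] f^k)·w^k) = ∑_{k≥1} (1/k)·([y^{−1}] f^k)·w^k. -/

import Mathlib

/-- The formal exponential `exp(G) = ∑_{j≥0} G^j / j!` of a power series `G` with zero
constant term; the `j`-sum is truncated at `j = n` when computing the coefficient of `x^n`,
which is valid since `G` has zero constant term. -/
noncomputable def formalExp (G : PowerSeries ℂ) : PowerSeries ℂ :=
  PowerSeries.mk fun n =>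
    ∑ j ∈ Finset.range (n + 1), PowerSeries.coeff n (G ^ j) / (j.factorial : ℂ)

/-!
Write `f(y) = h(y) / y` with `h ∈ ℂ⟦y⟧`, `h(0) = 1`, so that `[y^0] f^k = [y^k] h^k` and
`[y^{-1}] f^k = [y^{k-1}] h^k`. Let `φ(w)` solve `φ = w h(φ)`, i.e. `φ` is the compositional
inverse of `y / h(y)`. Substituting `y = φ(w)` in residues gives Lagrange inversion in the two
forms `[w^k] φ = [y^{k-1}] h^k / k` and `[w^k] (w φ' / φ) = [y^k] h^k`. The second says that
`A = ∑_{k≥1} [y^k] h^k w^k / k` satisfies `w A' = w φ' / φ - 1`, i.e. `exp A = φ / w`, so the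
left-hand side is `φ`, and the first identifies `φ` with the right-hand side.
-/

open PowerSeries Finset LaurentSeries

namespace PowerSeries

section CommRing

variable {R : Type*} [CommRing R]

theorem coeff_pow_eq_zero_of_lt {φ : R⟦X⟧} (hφ : constantCoeff φ = 0) {n j : ℕ} (h : n < j) :
    coeff n (φ ^ j) = 0 :=
  X_pow_dvd_iff.mp (pow_dvd_pow_of_dvd (X_dvd_iff.mpr hφ) j) n h

theorem coeff_subst_eq_sum_range {φ : R⟦X⟧} (hφ : constantCoeff φ = 0) (g : R⟦X⟧) {n N : ℕ}
    (hn : n < N) : coeff n (g.subst φ) = ∑ j ∈ range N, coeff j g * coeff n (φ ^ j) := by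
  rw [coeff_subst' (HasSubst.of_constantCoeff_zero' hφ)]
  refine finsum_eq_sum_of_support_subset _ fun j hj => ?_
  rw [coe_range, Set.mem_Iio]
  by_contra! hNj
  exact hj (by simp only [coeff_pow_eq_zero_of_lt hφ (hn.trans_le hNj), smul_zero])

theorem constantCoeff_subst_of_constantCoeff_eq_zero {φ : R⟦X⟧} (hφ : constantCoeff φ = 0)
    (g : R⟦X⟧) : constantCoeff (g.subst φ) = constantCoeff g := by
  simpa using coeff_subst_eq_sum_range hφ g zero_lt_one

theorem coeff_subst_mul {φ : R⟦X⟧} (hφ : constantCoeff φ = 0) (g T : R⟦X⟧) (N : ℕ) :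
    coeff N (g.subst φ * T) = ∑ j ∈ range (N + 1), coeff j g * coeff N (φ ^ j * T) := by
  simp_rw [coeff_mul, mul_sum]
  rw [sum_comm]
  refine sum_congr rfl fun x hx => ?_
  rw [coeff_subst_eq_sum_range hφ g (Nat.antidiagonal.fst_lt hx), sum_mul]
  exact sum_congr rfl fun j _ => mul_assoc _ _ _

end CommRing

section Field

variable {K : Type*} [Field K]

theorem subst_mul_inv_subst {h φ : K⟦X⟧} (hh : constantCoeff h ≠ 0) (hφ : constantCoeff φ = 0) :
    h.subst φ * (h.subst φ)⁻¹ = 1 :=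
  PowerSeries.mul_inv_cancel _ (by rwa [constantCoeff_subst_of_constantCoeff_eq_zero hφ])

theorem exists_eq_X_mul_subst {h : K⟦X⟧} (hh : constantCoeff h ≠ 0) :
    ∃ φ : K⟦X⟧, φ = X * h.subst φ := by
  have hP : constantCoeff (X * h⁻¹) = 0 := by simp
  have hP' : IsUnit (coeff 1 (X * h⁻¹)) := by simpa [coeff_succ_X_mul] using hh
  set φ := (X * h⁻¹).substInvOfIsUnit hP'
  have hφ : HasSubst φ := HasSubst.substInvOfIsUnit _ hP'
  have hinv : h⁻¹.subst φ * h.subst φ = 1 := by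
    rw [← subst_mul hφ, PowerSeries.inv_mul_cancel h hh, ← coe_substAlgHom hφ, map_one]
  refine ⟨φ, ?_⟩
  have hX : φ * h⁻¹.subst φ = X := by
    have := subst_substInvOfIsUnit_right _ hP hP'
    rwa [subst_mul hφ, subst_X hφ] at this
  calc φ = φ * (h⁻¹.subst φ * h.subst φ) := by rw [hinv, mul_one]
    _ = X * h.subst φ := by rw [← mul_assoc, hX]

variable [CharZero K]

theorem coeff_inv_pow_succ_mul_derivative_X_mul {u : K⟦X⟧} (hu : constantCoeff u ≠ 0) (m : ℕ) :
    coeff m (u⁻¹ ^ (m + 1) * d⁄dX K (X * u)) = if m = 0 then 1 else 0 := by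
  rcases eq_or_ne m 0 with rfl | hm
  · simp [hu]
  -- For `φ = X * u` this is `X ^ (m + 1)` times `m * φ' / φ ^ (m + 1) = -(φ ^ (-m))'`,
  -- and a derivative has no residue.
  have hderiv : C (m : K) * (u⁻¹ ^ (m + 1) * d⁄dX K (X * u)) =
      C ((m : K) + 1) * u⁻¹ ^ m - d⁄dX K (X * u⁻¹ ^ m) := by
    obtain ⟨n, rfl⟩ := Nat.exists_eq_add_one_of_ne_zero hm
    simp only [map_natCast, map_add, map_one, Derivation.leibniz, derivative_X, derivative_pow,
      derivative_inv', smul_eq_mul, Nat.add_sub_cancel]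
    push_cast
    linear_combination ((n + 1 : K⟦X⟧) * u⁻¹ ^ (n + 1)) * PowerSeries.inv_mul_cancel u hu
  have hcoeff := congrArg (coeff m) hderiv
  rw [coeff_C_mul, map_sub, coeff_C_mul, coeff_derivative, coeff_succ_X_mul,
    mul_comm _ ((m : K) + 1), sub_self] at hcoeff
  simpa [hm] using hcoeff

-- The change of variables `y = φ(w) = w u(w)` in a residue:
-- `Res_w g(φ) φ' / φ ^ (N + 1) = Res_y g / y ^ (N + 1)`.
theorem coeff_subst_X_mul_mul_derivative_mul_inv_pow {u : K⟦X⟧} (hu : constantCoeff u ≠ 0)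
    (g : K⟦X⟧) (N : ℕ) :
    coeff N (g.subst (X * u) * (d⁄dX K (X * u) * u⁻¹ ^ (N + 1))) = coeff N g := by
  have huv : u * u⁻¹ = 1 := PowerSeries.mul_inv_cancel u hu
  have hterm : ∀ j ∈ range (N + 1),
      coeff N ((X * u) ^ j * (d⁄dX K (X * u) * u⁻¹ ^ (N + 1))) = if j = N then 1 else 0 := by
    intro j hj
    obtain ⟨i, rfl⟩ := Nat.exists_eq_add_of_le (Nat.lt_succ_iff.mp (mem_range.mp hj))
    have hsplit : (X * u) ^ j * (d⁄dX K (X * u) * u⁻¹ ^ (j + i + 1)) =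
        X ^ j * (u⁻¹ ^ (i + 1) * d⁄dX K (X * u)) := by
      calc _ = X ^ j * (u * u⁻¹) ^ j * (u⁻¹ ^ (i + 1) * d⁄dX K (X * u)) := by ring
        _ = _ := by rw [huv, one_pow, mul_one]
    rw [hsplit, coeff_X_pow_mul', if_pos (Nat.le_add_right j i), Nat.add_sub_cancel_left,
      coeff_inv_pow_succ_mul_derivative_X_mul hu]
    simp
  rw [coeff_subst_mul (by simp) g, sum_congr rfl fun j hj => by rw [hterm j hj]]
  simp

theorem eq_of_derivative_eq_mul {a f g : K⟦X⟧} (hf : d⁄dX K f = a * f) (hg : d⁄dX K g = a * g)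
    (hfg : constantCoeff f = constantCoeff g) (hg0 : constantCoeff g ≠ 0) : f = g := by
  have hgg : g * g⁻¹ = 1 := PowerSeries.mul_inv_cancel g hg0
  have hquot : f * g⁻¹ = 1 := by
    refine derivative.ext ?_ (by simp [hfg, hg0])
    simp only [Derivation.leibniz, derivative_inv', hf, hg, smul_eq_mul, derivative_one]
    linear_combination -(a * f * g⁻¹) * hgg
  calc f = f * g⁻¹ * g := by rw [mul_assoc, mul_comm g⁻¹, hgg, mul_one]
    _ = g := by rw [hquot, one_mul]

section LagrangeInversion

variable {h φ : K⟦X⟧} (hh : constantCoeff h ≠ 0) (hφ : φ = X * h.subst φ)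
include hh hφ

theorem coeff_pow_eq_coeff_subst_pow_mul (k N : ℕ) :
    coeff N (h ^ k) = coeff N (h.subst φ ^ k * (d⁄dX K φ * (h.subst φ)⁻¹ ^ (N + 1))) := by
  have hφ0 : constantCoeff φ = 0 := by rw [hφ]; simp
  have hu : constantCoeff (h.subst φ) ≠ 0 := by
    rwa [constantCoeff_subst_of_constantCoeff_eq_zero hφ0]
  rw [← coeff_subst_X_mul_mul_derivative_mul_inv_pow hu (h ^ k) N, ← hφ,
    subst_pow (HasSubst.of_constantCoeff_zero' hφ0)]

theorem coeff_succ_of_eq_X_mul_subst (N : ℕ) :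
    coeff (N + 1) φ = ((N : K) + 1)⁻¹ * coeff N (h ^ (N + 1)) := by
  have huv := subst_mul_inv_subst hh (show constantCoeff φ = 0 by rw [hφ]; simp)
  have hφ' : h.subst φ ^ (N + 1) * (d⁄dX K φ * (h.subst φ)⁻¹ ^ (N + 1)) = d⁄dX K φ := by
    rw [mul_left_comm, ← mul_pow, huv, one_pow, mul_one]
  rw [coeff_pow_eq_coeff_subst_pow_mul hh hφ, hφ', coeff_derivative]
  field_simp

theorem coeff_derivative_mul_inv_subst (N : ℕ) :
    coeff N (d⁄dX K φ * (h.subst φ)⁻¹) = coeff N (h ^ N) := by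
  have huv := subst_mul_inv_subst hh (show constantCoeff φ = 0 by rw [hφ]; simp)
  have hφ' : h.subst φ ^ N * (d⁄dX K φ * (h.subst φ)⁻¹ ^ (N + 1)) =
      (h.subst φ * (h.subst φ)⁻¹) ^ N * (d⁄dX K φ * (h.subst φ)⁻¹) := by ring
  rw [coeff_pow_eq_coeff_subst_pow_mul hh hφ, hφ', huv, one_pow, one_mul]

end LagrangeInversion

end Field

end PowerSeries

theorem LaurentSeries.powerSeriesPart_pow_coeff {R : Type*} [CommSemiring R] (x : R⸨X⸩)
    (k n : ℕ) : coeff n (x.powerSeriesPart ^ k) = (x ^ k).coeff (k * x.order + n) := by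
  calc coeff n (x.powerSeriesPart ^ k)
      = (HahnSeries.single (k * x.order) 1 * ((x.powerSeriesPart ^ k : R⟦X⟧) : R⸨X⸩)).coeff
          (n + k * x.order) := by
        rw [HahnSeries.coeff_single_mul_add, one_mul, coeff_coe_powerSeries]
    _ = ((HahnSeries.single x.order 1 * (x.powerSeriesPart : R⸨X⸩)) ^ k).coeff
          (k * x.order + n) := by
        rw [mul_pow, HahnSeries.single_pow, one_pow, map_pow, nsmul_eq_mul, add_comm]
    _ = (x ^ k).coeff (k * x.order + n) := by rw [single_order_mul_powerSeriesPart]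

theorem constantCoeff_formalExp (G : ℂ⟦X⟧) : constantCoeff (formalExp G) = 1 := by
  rw [← coeff_zero_eq_constantCoeff_apply, formalExp, coeff_mk]
  simp

theorem formalExp_eq_subst_exp {G : ℂ⟦X⟧} (hG : constantCoeff G = 0) :
    formalExp G = (exp ℂ).subst G := by
  ext n
  rw [coeff_subst_eq_sum_range hG _ n.lt_succ_self, formalExp, coeff_mk]
  refine sum_congr rfl fun j _ => ?_
  simp [coeff_exp, div_eq_inv_mul]

theorem derivative_formalExp {G : ℂ⟦X⟧} (hG : constantCoeff G = 0) :
    d⁄dX ℂ (formalExp G) = d⁄dX ℂ G * formalExp G := by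
  rw [formalExp_eq_subst_exp hG, derivative_subst (HasSubst.of_constantCoeff_zero' hG),
    derivative_exp, mul_comm]

theorem X_mul_formalExp_eq_of_eq_X_mul_subst {h φ : ℂ⟦X⟧} (hh : constantCoeff h = 1)
    (hφ : φ = X * h.subst φ) :
    X * formalExp (mk fun k => if k = 0 then 0 else (k : ℂ)⁻¹ * coeff k (h ^ k)) = φ := by
  set A : ℂ⟦X⟧ := mk fun k => if k = 0 then 0 else (k : ℂ)⁻¹ * coeff k (h ^ k)
  set u : ℂ⟦X⟧ := h.subst φ
  have hh0 : constantCoeff h ≠ 0 := by simp [hh]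
  have hφ0 : constantCoeff φ = 0 := by rw [hφ]; simp
  have hu0 : constantCoeff u = 1 := by rw [constantCoeff_subst_of_constantCoeff_eq_zero hφ0, hh]
  have hA0 : constantCoeff A = 0 := by simp [A, ← coeff_zero_eq_constantCoeff_apply]
  have hlog : X * d⁄dX ℂ A = d⁄dX ℂ φ * u⁻¹ - 1 := by
    ext (_ | m)
    · rw [map_sub, coeff_derivative_mul_inv_subst hh0 hφ]
      simp
    · rw [coeff_succ_X_mul, coeff_derivative, map_sub, coeff_derivative_mul_inv_subst hh0 hφ,
        coeff_one, if_neg m.succ_ne_zero, sub_zero, coeff_mk, if_neg m.succ_ne_zero]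
      push_cast
      field_simp
  have hu : d⁄dX ℂ u = d⁄dX ℂ A * u := by
    have hdφ : d⁄dX ℂ φ = u + X * d⁄dX ℂ u := by
      conv_lhs => rw [hφ]
      simp [Derivation.leibniz, add_comm]
    refine mul_left_cancel₀ X_ne_zero ?_
    linear_combination (-u) * hlog - hdφ - d⁄dX ℂ φ * subst_mul_inv_subst hh0 hφ0
  rw [eq_of_derivative_eq_mul (derivative_formalExp hA0) hu (by rw [constantCoeff_formalExp, hu0])
    (by simp [hu0]), ← hφ]

theorem X_mul_formalExp_coeff_pow {h : ℂ⟦X⟧} (hh : constantCoeff h = 1) :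
    X * formalExp (mk fun k => if k = 0 then 0 else (k : ℂ)⁻¹ * coeff k (h ^ k)) =
      mk fun k => if k = 0 then 0 else (k : ℂ)⁻¹ * coeff (k - 1) (h ^ k) := by
  obtain ⟨φ, hφ⟩ := exists_eq_X_mul_subst (h := h) (by simp [hh])
  rw [X_mul_formalExp_eq_of_eq_X_mul_subst hh hφ]
  ext (_ | N)
  · rw [coeff_mk, if_pos rfl, hφ, coeff_zero_X_mul]
  · simp [coeff_succ_of_eq_X_mul_subst (by simp [hh]) hφ]

/-- **Proposition (Lagrange-Bürmann form).** Let `f(y) = y^{−1} + ∑_{k≥0} f_k y^k` be a formal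
Laurent series with complex coefficients, having at most a simple pole at `y = 0` with
residue `1` (encoded as `F : LaurentSeries ℂ` with `F.coeff k = 0` for `k < -1` and
`F.coeff (-1) = 1`).  Then, as formal power series in `w`:
`w·exp(∑_{k≥1} (1/k)·([y^0] f^k)·w^k) = ∑_{k≥1} (1/k)·([y^{−1}] f^k)·w^k`. -/
theorem X_mul_formalExp_const_coeff_pow (F : LaurentSeries ℂ)
    (hF : ∀ k < (-1 : ℤ), F.coeff k = 0) (hF1 : F.coeff (-1) = 1) :
    PowerSeries.X * formalExp (PowerSeries.mk fun k =>
        if k = 0 then 0 else (k : ℂ)⁻¹ * (F ^ k).coeff 0) =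
      PowerSeries.mk fun k => if k = 0 then 0 else (k : ℂ)⁻¹ * (F ^ k).coeff (-1) := by
  have hord : F.order = -1 := by
    refine le_antisymm (HahnSeries.order_le_of_coeff_ne_zero (by simp [hF1]))
      (not_lt.mp fun hlt => ?_)
    simp [HahnSeries.coeff_order_eq_zero.mp (hF _ hlt)] at hF1
  have hcoeff (k n : ℕ) : (F ^ k).coeff (n - k) = coeff n (F.powerSeriesPart ^ k) := by
    rw [powerSeriesPart_pow_coeff, hord]
    ring_nf
  have hh : constantCoeff F.powerSeriesPart = 1 := by
    rw [← coeff_zero_eq_constantCoeff_apply, powerSeriesPart_coeff, hord]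
    simpa using hF1
  convert X_mul_formalExp_coeff_pow hh using 5 with k _ k hk
  · rw [← hcoeff k k, sub_self]
  · rw [← hcoeff]
    congr
    omega
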